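/- Let λ ⊢ n = ℓs be a partition with empty ℓ-core. Then the number of cells c ∈ λ whose hook length h_c is divisible by ℓ equals s. -/

import Mathlib

/-- The cells of a partition `p` (parts `p 0 ≥ p 1 ≥ ⋯`), in 0-indexed
coordinates `(a, b)` (column `a`, row `b`), all of which lie in `range n × range n`
when `p` is a partition of `n`. -/
def cells (p : ℕ → ℕ) (n : ℕ) : Finset (ℕ × ℕ) :=
  (Finset.range n ×ˢ Finset.range n).filter fun c => c.1 < p c.2

/-- The conjugate partition: `conjP p n a` is the number of rows `b < n` with `a < p b`. -/
def conjP (p : ℕ → ℕ) (n : ℕ) (a : ℕ) : ℕ :=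
  ((Finset.range n).filter fun b => a < p b).card

/-- The hook length of a cell `c = (a,b)`: `(λ_b - a) + (λ'_a - b) - 1` in 0-indexed
coordinates (which is `(λ_b - a) + (λ'_a - b) + 1` in the 1-indexed convention). -/
def hookLen (p : ℕ → ℕ) (n : ℕ) (c : ℕ × ℕ) : ℕ :=
  (p c.2 - c.1) + (conjP p n c.1 - c.2) - 1

/-- The opposite hook length of a 0-indexed cell `(a,b)` is `a + b + 1`
(that is, `a + b - 1` in the 1-indexed convention). -/
def hookOp (c : ℕ × ℕ) : ℕ := c.1 + c.2 + 1

/-- `p` is a partition of `n`: weakly decreasing, at most `n` parts, total size `n`. -/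
def IsPartitionOf (n : ℕ) (p : ℕ → ℕ) : Prop :=
  Antitone p ∧ p n = 0 ∧ ∑ i ∈ Finset.range n, p i = n

/-- Two cells are adjacent if they share an edge. -/
def AdjCell (c d : ℕ × ℕ) : Prop :=
  (c.1 = d.1 ∧ (c.2 + 1 = d.2 ∨ d.2 + 1 = c.2)) ∨
  (c.2 = d.2 ∧ (c.1 + 1 = d.1 ∨ d.1 + 1 = c.1))

/-- `λ/μ` is a ribbon of length `ℓ`: `μ ⊆ λ`, the skew shape has `ℓ` cells, is
(edge-)connected, and contains no `2 × 2` square. -/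
def IsRibbon (q p : ℕ → ℕ) (n ℓ : ℕ) : Prop :=
  (∀ i, q i ≤ p i) ∧
  (cells p n \ cells q n).card = ℓ ∧
  (cells p n \ cells q n).Nonempty ∧
  (∀ c ∈ cells p n \ cells q n, ∀ d ∈ cells p n \ cells q n,
    Relation.ReflTransGen
      (fun x y => x ∈ cells p n \ cells q n ∧ y ∈ cells p n \ cells q n ∧ AdjCell x y) c d) ∧
  ¬ ∃ a b : ℕ, (a, b) ∈ cells p n \ cells q n ∧ (a + 1, b) ∈ cells p n \ cells q n ∧
      (a, b + 1) ∈ cells p n \ cells q n ∧ (a + 1, b + 1) ∈ cells p n \ cells q n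

/-- `p` can be written as `s` successive ribbons each of length `ℓ`
(equivalently, the `ℓ`-core of `p` is empty). -/
def RibbonDecomp (p : ℕ → ℕ) (n ℓ s : ℕ) : Prop :=
  ∃ f : ℕ → ℕ → ℕ, (∀ i, Antitone (f i)) ∧ (∀ j, f 0 j = 0) ∧ f s = p ∧
    ∀ i < s, IsRibbon (f i) (f (i + 1)) n ℓ

open Finset

def beta (q : ℕ → ℕ) (n i : ℕ) : ℕ := q i + (n - 1 - i)

def phi (q : ℕ → ℕ) (n a : ℕ) : ℕ := a + n - conjP q n a

lemma conj_le (q : ℕ → ℕ) (n a : ℕ) : conjP q n a ≤ n := by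
  simpa [conjP] using Finset.card_le_card (Finset.filter_subset _ (Finset.range n))

lemma conj_anti (q : ℕ → ℕ) (n : ℕ) {a a' : ℕ} (h : a ≤ a') :
    conjP q n a' ≤ conjP q n a := by
  apply Finset.card_le_card
  intro j hj
  simp only [Finset.mem_filter] at hj ⊢
  exact ⟨hj.1, by omega⟩

lemma lt_conj (hq : Antitone q) {n a b : ℕ} (hb : b < n) (hab : a < q b) :
    b < conjP q n a := by
  have : Finset.range (b+1) ⊆ (Finset.range n).filter fun j => a < q j := by
    intro j hj
    simp only [Finset.mem_range] at hj
    simp only [Finset.mem_filter, Finset.mem_range]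
    exact ⟨lt_of_lt_of_le hj hb, lt_of_lt_of_le hab (hq (Nat.lt_succ_iff.mp hj))⟩
  simpa [conjP] using Finset.card_le_card this

lemma conj_le_of (hq : Antitone q) {n a b : ℕ} (h : q b ≤ a) : conjP q n a ≤ b := by
  have : ((Finset.range n).filter fun j => a < q j) ⊆ Finset.range b := by
    intro j hj
    simp only [Finset.mem_filter, Finset.mem_range] at hj ⊢
    by_contra hc
    push_neg at hc
    exact absurd (lt_of_le_of_lt h hj.2) (not_lt.mpr (hq hc))
  simpa [conjP] using Finset.card_le_card this

lemma lt_of_lt_conj (hq : Antitone q) {n a b : ℕ} (h : b < conjP q n a) : a < q b := by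
  by_contra hc
  exact absurd h (not_lt.mpr (conj_le_of hq (not_lt.mp hc)))

lemma beta_strictAnti (hq : Antitone q) {n i j : ℕ} (hij : i < j) (hj : j < n) :
    beta q n j < beta q n i := by
  have := hq hij.le
  unfold beta; omega

lemma phi_lt (hq : Antitone q) {n i a : ℕ} (hi : i < n) (ha : a < q i) :
    phi q n a < beta q n i := by
  have h1 := lt_conj hq hi ha
  have h2 := conj_le q n a
  unfold phi beta; omega

lemma phi_mono (hq : Antitone q) {n a a' : ℕ} (h : a < a') : phi q n a < phi q n a' := by
  have h1 := conj_anti q n h.le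
  have h2 := conj_le q n a
  have h3 := conj_le q n a'
  unfold phi; omega

lemma phi_ne_beta (hq : Antitone q) {n i a j : ℕ} (hi : i < n) (ha : a < q i)
    (hij : i < j) (hj : j < n) : phi q n a ≠ beta q n j := by
  intro hcon
  have h2 := conj_le q n a
  unfold phi beta at hcon
  rcases lt_or_ge j (conjP q n a) with hc | hc
  · have := lt_of_lt_conj hq hc
    omega
  · have : ¬ (a < q j) := fun h => absurd (lt_conj hq hj h) (not_lt.mpr hc)
    omega

lemma hook_eq (hq : Antitone q) {n i a : ℕ} (hi : i < n) (ha : a < q i) :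
    hookLen q n (a, i) = beta q n i - phi q n a := by
  have h1 := lt_conj hq hi ha
  have h2 := conj_le q n a
  unfold hookLen phi beta conjP at *
  simp only
  omega

theorem row_count (hq : Antitone q) {n ℓ i : ℕ} (hi : i < n) :
    beta q n i / ℓ = ((range (q i)).filter fun a => ℓ ∣ hookLen q n (a, i)).card +
      ((Ioo i n).filter fun j => ℓ ∣ beta q n i - beta q n j).card := by
  set B := beta q n i with hB
  have hdisj : Disjoint ((range (q i)).image (phi q n)) ((Ioo i n).image (beta q n)) := by
    rw [Finset.disjoint_left]
    intro x hx hx'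
    simp only [Finset.mem_image, Finset.mem_range, Finset.mem_Ioo] at hx hx'
    obtain ⟨a, ha, rfl⟩ := hx
    obtain ⟨j, ⟨hj1, hj2⟩, hj3⟩ := hx'
    exact phi_ne_beta hq hi ha hj1 hj2 hj3.symm
  have hsub : ((range (q i)).image (phi q n)) ∪ ((Ioo i n).image (beta q n)) ⊆ range B := by
    intro x hx
    simp only [Finset.mem_union, Finset.mem_image, Finset.mem_range, Finset.mem_Ioo] at hx ⊢
    rcases hx with ⟨a, ha, rfl⟩ | ⟨j, ⟨hj1, hj2⟩, rfl⟩
    · exact phi_lt hq hi ha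
    · exact beta_strictAnti hq hj1 hj2
  have hinjφ : Set.InjOn (phi q n) (range (q i)) := by
    intro a _ a' _ h
    by_contra hne
    rcases Nat.lt_or_ge a a' with h1 | h1
    · exact absurd h (ne_of_lt (phi_mono hq h1))
    · exact absurd h.symm (ne_of_lt (phi_mono hq (by omega)))
  have hinjβ : Set.InjOn (beta q n) (Ioo i n) := by
    intro a ha a' ha' h
    simp only [Finset.coe_Ioo, Set.mem_Ioo] at ha ha'
    by_contra hne
    rcases Nat.lt_or_ge a a' with h1 | h1
    · exact absurd h (ne_of_gt (beta_strictAnti hq h1 ha'.2))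
    · exact absurd h (ne_of_lt (beta_strictAnti hq (by omega) ha.2))
  have hcards : (((range (q i)).image (phi q n)) ∪ ((Ioo i n).image (beta q n))).card = B := by
    rw [Finset.card_union_of_disjoint hdisj, Finset.card_image_of_injOn hinjφ,
      Finset.card_image_of_injOn hinjβ]
    simp only [Finset.card_range, Nat.card_Ioo, hB, beta]
    omega
  have hEq : range B = ((range (q i)).image (phi q n)) ∪ ((Ioo i n).image (beta q n)) :=
    (Finset.eq_of_subset_of_card_le hsub (by rw [hcards, Finset.card_range])).symm
  have hcount : ((range B).filter fun m => ℓ ∣ B - m).card = B / ℓ := by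
    rw [← Nat.Ioc_filter_dvd_card_eq_div B ℓ]
    apply Finset.card_nbij (fun m => B - m)
    · intro m hm
      simp only [Finset.mem_coe, Finset.coe_filter, Set.mem_setOf_eq, Finset.mem_filter, Finset.mem_range, Finset.mem_Ioc] at hm ⊢
      exact ⟨by omega, hm.2⟩
    · intro m hm m' hm' h
      simp only [Finset.coe_filter, Finset.mem_range, Set.mem_setOf_eq] at hm hm'
      simp only at h
      omega
    · intro x hx
      simp only [Finset.coe_filter, Finset.mem_Ioc, Set.mem_setOf_eq] at hx
      obtain ⟨⟨hx1, hx2⟩, hx3⟩ := hx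
      refine ⟨B - x, ?_, by simp only; omega⟩
      simp only [Finset.coe_filter, Finset.mem_range, Set.mem_setOf_eq]
      exact ⟨by omega, by rw [Nat.sub_sub_self hx2]; exact hx3⟩
  rw [← hcount, hEq, Finset.filter_union,
    Finset.card_union_of_disjoint (Finset.disjoint_filter_filter hdisj),
    Finset.filter_image, Finset.filter_image,
    Finset.card_image_of_injOn (hinjφ.mono (Finset.coe_subset.mpr (Finset.filter_subset _ _))),
    Finset.card_image_of_injOn (hinjβ.mono (Finset.coe_subset.mpr (Finset.filter_subset _ _)))]
  congr 1
  apply Finset.card_bij (fun a _ => a)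
  · intro a ha
    simp only [Finset.mem_filter, Finset.mem_range] at ha ⊢
    exact ⟨ha.1, by rw [hook_eq hq hi ha.1]; exact ha.2⟩
  · intro a _ a' _ h; exact h
  · intro a ha
    simp only [Finset.mem_filter, Finset.mem_range] at ha
    refine ⟨a, ?_, rfl⟩
    simp only [Finset.mem_filter, Finset.mem_range]
    exact ⟨ha.1, by rw [← hook_eq hq hi ha.1]; exact ha.2⟩

def Bset (q : ℕ → ℕ) (n : ℕ) : Finset ℕ := (Finset.range n).image (beta q n)

def pcount (ℓ : ℕ) (B : Finset ℕ) : ℕ :=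
  ∑ x ∈ B, (B.filter fun y => y < x ∧ ℓ ∣ x - y).card

lemma beta_injOn (hq : Antitone q) {n : ℕ} : Set.InjOn (beta q n) (range n) := by
  intro a ha a' ha' h
  simp only [Finset.coe_range, Set.mem_Iio] at ha ha'
  by_contra hne
  rcases Nat.lt_or_ge a a' with h1 | h1
  · exact absurd h (ne_of_gt (beta_strictAnti hq h1 ha'))
  · exact absurd h (ne_of_lt (beta_strictAnti hq (by omega) ha))

lemma cells_eq_biUnion (q : ℕ → ℕ) {n : ℕ} (hbd : ∀ j, j < n → q j ≤ n) :
    cells q n = (range n).biUnion fun i => (range (q i)).image fun a => (a, i) := by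
  ext ⟨a, i⟩
  simp only [cells, Finset.mem_filter, Finset.mem_product, Finset.mem_range,
    Finset.mem_biUnion, Finset.mem_image, Prod.mk.injEq]
  constructor
  · rintro ⟨⟨_, hi⟩, ha⟩
    exact ⟨i, hi, a, ha, rfl, rfl⟩
  · rintro ⟨j, hj, b, hb, rfl, rfl⟩
    exact ⟨⟨lt_of_lt_of_le hb (hbd _ hj), hj⟩, hb⟩

theorem count_eq (hq : Antitone q) {n ℓ : ℕ} (hbd : ∀ j, j < n → q j ≤ n) :
    ((cells q n).filter fun c => ℓ ∣ hookLen q n c).card + pcount ℓ (Bset q n)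
      = ∑ x ∈ Bset q n, x / ℓ := by
  have hN : ((cells q n).filter fun c => ℓ ∣ hookLen q n c).card
      = ∑ i ∈ range n, ((range (q i)).filter fun a => ℓ ∣ hookLen q n (a, i)).card := by
    rw [cells_eq_biUnion q hbd, Finset.filter_biUnion, Finset.card_biUnion]
    · apply Finset.sum_congr rfl
      intro i _
      rw [Finset.filter_image, Finset.card_image_of_injective]
      intro a a' h
      simpa using h
    · intro i _ j _ hij
      apply Finset.disjoint_left.mpr
      intro c hc hc'
      simp only [Finset.mem_filter, Finset.mem_image, Finset.mem_range] at hc hc'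
      obtain ⟨⟨a, _, rfl⟩, _⟩ := hc
      obtain ⟨⟨a', _, h'⟩, _⟩ := hc'
      have := (Prod.ext_iff.mp h').2
      simp only at this
      exact hij this.symm
  have hF : ∑ x ∈ Bset q n, x / ℓ = ∑ i ∈ range n, beta q n i / ℓ :=
    Finset.sum_image fun a ha a' ha' h => beta_injOn hq ha ha' h
  have hG : pcount ℓ (Bset q n)
      = ∑ i ∈ range n, ((Ioo i n).filter fun j => ℓ ∣ beta q n i - beta q n j).card := by
    unfold pcount Bset
    rw [Finset.sum_image fun a ha a' ha' h => beta_injOn hq ha ha' h]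
    apply Finset.sum_congr rfl
    intro i hi
    simp only [Finset.mem_range] at hi
    symm
    apply Finset.card_nbij (beta q n)
    · intro j hj
      simp only [Finset.mem_coe, Finset.mem_filter, Finset.mem_Ioo] at hj
      simp only [Finset.mem_coe, Finset.mem_filter, Finset.mem_image, Bset]
      exact ⟨⟨j, Finset.mem_range.mpr hj.1.2, rfl⟩,
        beta_strictAnti hq hj.1.1 hj.1.2, hj.2⟩
    · intro j hj j' hj' h
      simp only [Finset.coe_filter, Finset.mem_Ioo, Set.mem_setOf_eq] at hj hj'
      exact beta_injOn hq (by simp; omega) (by simp; omega) h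
    · intro y hy
      simp only [Finset.coe_filter, Set.mem_setOf_eq, Finset.mem_image,
        Finset.mem_range] at hy
      obtain ⟨⟨j, hj, rfl⟩, hlt, hdvd⟩ := hy
      refine ⟨j, ?_, rfl⟩
      simp only [Finset.coe_filter, Finset.mem_Ioo, Set.mem_setOf_eq]
      refine ⟨⟨?_, hj⟩, hdvd⟩
      by_contra hc
      push_neg at hc
      rcases Nat.lt_or_ge j i with h1 | h1
      · exact absurd hlt (not_lt.mpr (le_of_lt (beta_strictAnti hq h1 hi)))
      · have : j = i := by omega
        subst this; exact absurd hlt (lt_irrefl _)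
  rw [hN, hF, hG, ← Finset.sum_add_distrib]
  apply Finset.sum_congr rfl
  intro i hi
  exact (row_count hq (Finset.mem_range.mp hi)).symm

lemma no_mid {ℓ m x z : ℕ} (hx : m + ℓ = x) (h1 : m < z) (h2 : z < x) (hd : ℓ ∣ x - z) :
    False := by
  have := Nat.le_of_dvd (by omega) hd
  omega

lemma no_mid' {ℓ m x z : ℕ} (hx : m + ℓ = x) (h1 : m < z) (h2 : z < x) (hd : ℓ ∣ z - m) :
    False := by
  have := Nat.le_of_dvd (by omega) hd
  omega

lemma dvd_shift {ℓ m x z : ℕ} (hx : m + ℓ = x) (hz : z < m) : (ℓ ∣ m - z) ↔ (ℓ ∣ x - z) := by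
  constructor
  · intro h
    rw [show x - z = (m - z) + ℓ by omega]
    exact dvd_add h dvd_rfl
  · intro h
    rw [show m - z = (x - z) - ℓ by omega]
    exact Nat.dvd_sub h dvd_rfl

lemma dvd_shift' {ℓ m x y : ℕ} (hx : m + ℓ = x) (hy : x < y) : (ℓ ∣ y - m) ↔ (ℓ ∣ y - x) := by
  constructor
  · intro h
    rw [show y - x = (y - m) - ℓ by omega]
    exact Nat.dvd_sub h dvd_rfl
  · intro h
    rw [show y - m = (y - x) + ℓ by omega]
    exact dvd_add h dvd_rfl

lemma sumdiv_move {ℓ x : ℕ} {B : Finset ℕ} (hl : 0 < ℓ) (hx : x ∈ B) (hlx : ℓ ≤ x)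
    (hm : x - ℓ ∉ B) :
    ∑ y ∈ insert (x - ℓ) (B.erase x), y / ℓ + 1 = ∑ y ∈ B, y / ℓ := by
  rw [Finset.sum_insert (fun h => hm (Finset.mem_of_mem_erase h)),
    ← Finset.sum_erase_add B _ hx]
  have : (x - ℓ) / ℓ + 1 = x / ℓ := by
    rw [← Nat.add_div_right (x - ℓ) hl, Nat.sub_add_cancel hlx]
  omega

lemma pcount_move {ℓ x : ℕ} {B : Finset ℕ} (hl : 0 < ℓ) (hx : x ∈ B) (hlx : ℓ ≤ x)
    (hm : x - ℓ ∉ B) :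
    pcount ℓ (insert (x - ℓ) (B.erase x)) = pcount ℓ B := by
  set m := x - ℓ with hmdef
  have hmx : m + ℓ = x := by omega
  have hmem : m ∉ B.erase x := fun h => hm (Finset.mem_of_mem_erase h)
  unfold pcount
  rw [Finset.sum_insert hmem]
  -- claim 1 : term at m equals term at x
  have claim1 : ((insert m (B.erase x)).filter fun y => y < m ∧ ℓ ∣ m - y).card
      = (B.filter fun y => y < x ∧ ℓ ∣ x - y).card := by
    rw [Finset.filter_insert, if_neg (by simp)]
    have h1 : ((B.erase x).filter fun y => y < m ∧ ℓ ∣ m - y)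
        = ((B.erase x).filter fun y => y < x ∧ ℓ ∣ x - y) := by
      apply Finset.filter_congr
      intro z hz
      have hzx : z ≠ x := Finset.ne_of_mem_erase hz
      have hzB : z ∈ B := Finset.mem_of_mem_erase hz
      have hzm : z ≠ m := fun h => hm (h ▸ hzB)
      constructor
      · rintro ⟨h1, h2⟩
        exact ⟨by omega, (dvd_shift hmx h1).mp h2⟩
      · rintro ⟨h1, h2⟩
        have hzm' : z < m := by
          rcases Nat.lt_or_ge z m with h | h
          · exact h
          · exact absurd h2 (fun hd => no_mid hmx (by omega) (by omega) hd)
        exact ⟨hzm', (dvd_shift hmx hzm').mpr h2⟩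
    rw [h1, Finset.filter_erase, Finset.erase_eq_of_notMem]
    simp only [Finset.mem_filter]
    rintro ⟨-, h, -⟩
    exact absurd h (lt_irrefl x)
  -- claim 2 : terms at other y are unchanged
  have claim2 : ∀ y ∈ B.erase x,
      ((insert m (B.erase x)).filter fun z => z < y ∧ ℓ ∣ y - z).card
      = (B.filter fun z => z < y ∧ ℓ ∣ y - z).card := by
    intro y hy
    have hyx : y ≠ x := Finset.ne_of_mem_erase hy
    have hyB : y ∈ B := Finset.mem_of_mem_erase hy
    have hym : y ≠ m := fun h => hm (h ▸ hyB)
    have hiff : (m < y ∧ ℓ ∣ y - m) ↔ (x < y ∧ ℓ ∣ y - x) := by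
      constructor
      · rintro ⟨h1, h2⟩
        have hxy : x < y := by
          rcases Nat.lt_or_ge y x with h | h
          · exact absurd h2 (fun hd => no_mid' hmx h1 h hd)
          · omega
        exact ⟨hxy, (dvd_shift' hmx hxy).mp h2⟩
      · rintro ⟨h1, h2⟩
        exact ⟨by omega, (dvd_shift' hmx h1).mpr h2⟩
    conv_rhs => rw [← Finset.insert_erase hx]
    rw [Finset.filter_insert, Finset.filter_insert]
    by_cases hPx : x < y ∧ ℓ ∣ y - x
    · rw [if_pos (hiff.mpr hPx), if_pos hPx, Finset.card_insert_of_notMem,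
        Finset.card_insert_of_notMem]
      · intro h; exact absurd (Finset.mem_of_mem_filter _ h) (Finset.notMem_erase x B)
      · intro h; exact hmem (Finset.mem_of_mem_filter _ h)
    · rw [if_neg (fun h => hPx (hiff.mp h)), if_neg hPx]
  rw [claim1, Finset.sum_congr rfl claim2, ← Finset.add_sum_erase B _ hx]

theorem ribbon_struct {q p' : ℕ → ℕ} {n ℓ : ℕ} (hq : Antitone q) (hp : Antitone p')
    (hbd : ∀ j, p' j ≤ n) (hpn : p' n = 0) (hr : IsRibbon q p' n ℓ) :
    ∃ a b, a ≤ b ∧ b < n ∧ (∀ i, i < a → q i = p' i) ∧ (∀ i, b < i → q i = p' i) ∧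
      (∀ i, a ≤ i → i < b → q i + 1 = p' (i + 1)) ∧
      (∀ i, a ≤ i → i ≤ b → q i < p' i) ∧ ℓ + q b = p' a + (b - a) := by
  obtain ⟨hle, hcard, hne, hconn, h2x2⟩ := hr
  set D := cells p' n \ cells q n with hD
  have memD : ∀ c : ℕ × ℕ, c ∈ D ↔ c.2 < n ∧ q c.2 ≤ c.1 ∧ c.1 < p' c.2 := by
    intro c
    simp only [hD, cells, Finset.mem_sdiff, Finset.mem_filter, Finset.mem_product,
      Finset.mem_range, not_and, and_imp]
    constructor
    · rintro ⟨⟨⟨h1, h2⟩, h3⟩, h4⟩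
      exact ⟨h2, by by_contra hc; push_neg at hc; exact absurd h3 (by have := h4 h1 h2; omega), h3⟩
    · rintro ⟨h1, h2, h3⟩
      have hc1 : c.1 < n := lt_of_lt_of_le h3 (hbd c.2)
      exact ⟨⟨⟨hc1, h1⟩, h3⟩, fun _ _ => by omega⟩
  set RO : Finset ℕ := (range n).filter fun i => q i < p' i with hRO
  have hROne : RO.Nonempty := by
    obtain ⟨c, hc⟩ := hne
    rw [memD] at hc
    exact ⟨c.2, by simp only [hRO, Finset.mem_filter, Finset.mem_range]; exact ⟨hc.1, by omega⟩⟩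
  set a := RO.min' hROne with ha
  set b := RO.max' hROne with hb
  have hmema : a ∈ RO := Finset.min'_mem _ _
  have hmemb : b ∈ RO := Finset.max'_mem _ _
  have hab : a ≤ b := Finset.min'_le _ _ hmemb
  have hbn : b < n := by
    have := hmemb; simp only [hRO, Finset.mem_filter, Finset.mem_range] at this; exact this.1
  have hqa : q a < p' a := by
    have := hmema; simp only [hRO, Finset.mem_filter, Finset.mem_range] at this; exact this.2
  have hqb : q b < p' b := by
    have := hmemb; simp only [hRO, Finset.mem_filter, Finset.mem_range] at this; exact this.2
  have han : a < n := lt_of_le_of_lt hab hbn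
  have hcellA : ((q a, a) : ℕ × ℕ) ∈ D := by rw [memD]; exact ⟨han, le_refl _, hqa⟩
  have hcellB : ((q b, b) : ℕ × ℕ) ∈ D := by rw [memD]; exact ⟨hbn, le_refl _, hqb⟩
  -- connectivity invariants
  have cross_row : ∀ j, (∀ t, ((t, j) : ℕ × ℕ) ∉ D) → ∀ c d : ℕ × ℕ,
      Relation.ReflTransGen (fun x y => x ∈ D ∧ y ∈ D ∧ AdjCell x y) c d →
      c.2 < j → d.2 < j := by
    intro j hj c d h
    induction h with
    | refl => exact id
    | tail h1 h2 ih =>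
      intro hc
      rename_i x y
      obtain ⟨hx, hy, hadj⟩ := h2
      have hxj := ih hc
      have hyj : y.2 ≠ j := by
        intro hcon
        exact hj y.1 (by rw [← hcon]; exact hy)
      unfold AdjCell at hadj
      omega
  have cross_bdy : ∀ i, p' (i+1) ≤ q i → ∀ c d : ℕ × ℕ,
      Relation.ReflTransGen (fun x y => x ∈ D ∧ y ∈ D ∧ AdjCell x y) c d →
      c.2 ≤ i → d.2 ≤ i := by
    intro i hcut c d h
    induction h with
    | refl => exact id
    | tail h1 h2 ih =>
      intro hc
      rename_i x y
      obtain ⟨hx, hy, hadj⟩ := h2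
      have hxi := ih hc
      rw [memD] at hx hy
      by_contra hcon
      have hy2 : y.2 = i + 1 ∧ x.2 = i ∧ x.1 = y.1 := by unfold AdjCell at hadj; omega
      obtain ⟨e1, e2, e3⟩ := hy2
      rw [e1] at hy
      rw [e2] at hx
      omega
  -- interval claim
  have hint : ∀ i, a ≤ i → i ≤ b → q i < p' i := by
    intro i hai hib
    by_contra hc
    push_neg at hc
    have hrowempty : ∀ t, ((t, i) : ℕ × ℕ) ∉ D := by
      intro t ht
      rw [memD] at ht
      dsimp only at ht
      have := hle i
      omega
    have hia : a ≠ i := fun h => absurd hqa (by rw [h]; omega)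
    have hib' : i ≠ b := fun h => absurd hqb (by rw [← h]; omega)
    have h5 : a < i := by omega
    have h6 : b < i := cross_row i hrowempty _ _ (hconn _ hcellA _ hcellB) h5
    omega
  -- step claim
  have hstep : ∀ i, a ≤ i → i < b → q i + 1 = p' (i + 1) := by
    intro i hai hib
    have h1 : q i < p' (i + 1) := by
      by_contra hc
      push_neg at hc
      have h5 : a ≤ i := hai
      have h6 : b ≤ i := cross_bdy i hc _ _ (hconn _ hcellA _ hcellB) h5
      omega
    have h2 : ¬ (q i + 1 < p' (i + 1)) := by
      intro hc
      apply h2x2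
      have hin : i + 1 ≤ b := hib
      have hii : i + 1 < n := by omega
      have hqi : q i < p' i := hint i hai (by omega)
      have hq1 : q (i+1) ≤ q i := hq (by omega)
      have hp1 : p' (i+1) ≤ p' i := hp (by omega)
      refine ⟨q i, i, ?_, ?_, ?_, ?_⟩ <;> rw [memD] <;> dsimp only <;> omega
    omega
  -- outside rows
  have hout1 : ∀ i, i < a → q i = p' i := by
    intro i hia
    have : i ∉ RO := fun h => absurd (Finset.min'_le _ _ h) (by omega)
    simp only [hRO, Finset.mem_filter, Finset.mem_range, not_and, not_lt] at this
    have := this (by omega)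
    have := hle i
    omega
  have hout2 : ∀ i, b < i → q i = p' i := by
    intro i hbi
    rcases Nat.lt_or_ge i n with hin | hin
    · have : i ∉ RO := fun h => absurd (Finset.le_max' _ _ h) (by omega)
      simp only [hRO, Finset.mem_filter, Finset.mem_range, not_and, not_lt] at this
      have := this hin
      have := hle i
      omega
    · have h1 : p' i ≤ p' n := hp hin
      have h3 := hle i
      omega
  -- cardinality: ℓ = ∑ (p' i - q i) over range n
  have hDbi : D = (range n).biUnion fun i => (Ico (q i) (p' i)).image fun t => (t, i) := by
    ext c
    rw [memD]
    simp only [Finset.mem_biUnion, Finset.mem_image, Finset.mem_Ico, Finset.mem_range]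
    constructor
    · rintro ⟨h1, h2, h3⟩
      exact ⟨c.2, h1, c.1, ⟨h2, h3⟩, rfl⟩
    · rintro ⟨j, hj, t, ⟨ht1, ht2⟩, rfl⟩
      exact ⟨hj, ht1, ht2⟩
  have hsum : ℓ = ∑ i ∈ range n, (p' i - q i) := by
    rw [← hcard, hDbi, Finset.card_biUnion]
    · apply Finset.sum_congr rfl
      intro i _
      rw [Finset.card_image_of_injective _ (fun t t' h => (Prod.ext_iff.mp h).1),
        Nat.card_Ico]
    · intro i _ j _ hij
      apply Finset.disjoint_left.mpr
      intro c hc hc'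
      simp only [Finset.mem_image, Finset.mem_Ico] at hc hc'
      obtain ⟨t, _, rfl⟩ := hc
      obtain ⟨t', _, h'⟩ := hc'
      exact hij ((Prod.ext_iff.mp h').2).symm
  have hsum2 : ∑ i ∈ range n, (p' i - q i) = ∑ i ∈ Icc a b, (p' i - q i) := by
    symm
    apply Finset.sum_subset
    · intro i hi
      simp only [Finset.mem_Icc] at hi
      simp only [Finset.mem_range]
      omega
    · intro i _ hi
      simp only [Finset.mem_Icc, not_and, not_le] at hi
      rcases Nat.lt_or_ge i a with h | h
      · rw [hout1 i h]; omega
      · rw [hout2 i (hi h)]; omega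
  -- telescoping
  have tele : ∀ b', a ≤ b' → (∀ i, a ≤ i → i < b' → q i + 1 = p' (i + 1)) →
      (∀ i, a ≤ i → i ≤ b' → q i ≤ p' i) →
      ∑ i ∈ Icc a b', (p' i - q i) + q b' = p' a + (b' - a) := by
    intro b' hb'
    induction b', hb' using Nat.le_induction with
    | base =>
      intro _ hle'
      have := hle' a (le_refl _) (le_refl _)
      simp only [Finset.Icc_self, Finset.sum_singleton]
      omega
    | succ m hm ih =>
      intro hstep' hle'
      rw [Finset.sum_Icc_succ_top (by omega)]
      have h1 := ih (fun i h1 h2 => hstep' i h1 (by omega)) (fun i h1 h2 => hle' i h1 (by omega))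
      have h2 := hstep' m hm (by omega)
      have h3 := hle' (m+1) (by omega) (le_refl _)
      omega
  have htel := tele b hab hstep (fun i h1 h2 => le_of_lt (hint i h1 h2))
  exact ⟨a, b, hab, hbn, hout1, hout2, hstep, hint, by omega⟩

theorem bset_move {q p' : ℕ → ℕ} {n ℓ a b : ℕ} (hq : Antitone q) (hp : Antitone p')
    (hab : a ≤ b) (hbn : b < n)
    (hout1 : ∀ i, i < a → q i = p' i) (hout2 : ∀ i, b < i → q i = p' i)
    (hstep : ∀ i, a ≤ i → i < b → q i + 1 = p' (i + 1))
    (hint : ∀ i, a ≤ i → i ≤ b → q i < p' i)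
    (htel : ℓ + q b = p' a + (b - a)) :
    beta p' n a ∈ Bset p' n ∧ ℓ ≤ beta p' n a ∧ beta p' n a - ℓ ∉ Bset p' n ∧
      Bset q n = insert (beta p' n a - ℓ) ((Bset p' n).erase (beta p' n a)) := by
  set x := beta p' n a with hx
  have han : a < n := by omega
  have hmx : beta q n b + ℓ = x := by
    simp only [hx, beta]; omega
  have hm : x - ℓ = beta q n b := by omega
  have hq1 : ∀ i, i < a → beta q n i = beta p' n i := by
    intro i h; simp only [beta, hout1 i h]
  have hq2 : ∀ i, b < i → beta q n i = beta p' n i := by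
    intro i h; simp only [beta, hout2 i h]
  have hq3 : ∀ i, a ≤ i → i < b → beta q n i = beta p' n (i + 1) := by
    intro i h1 h2
    have := hstep i h1 h2
    simp only [beta]; omega
  have hxmem : x ∈ Bset p' n := Finset.mem_image.mpr ⟨a, Finset.mem_range.mpr han, rfl⟩
  have hlx : ℓ ≤ x := by omega
  have hmnot : x - ℓ ∉ Bset p' n := by
    rw [hm]
    intro hcon
    obtain ⟨j, hj, hjeq⟩ := Finset.mem_image.mp hcon
    rw [Finset.mem_range] at hj
    rcases le_or_gt j b with h | h
    · have h1 : beta q n b < beta p' n b := by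
        have := hint b hab (le_refl _); simp only [beta]; omega
      rcases Nat.lt_or_ge j b with h2 | h2
      · exact absurd hjeq (by have := beta_strictAnti hp h2 hbn; omega)
      · have h3 : j = b := by omega
        rw [h3] at hjeq
        omega
    · have h1 : beta p' n j = beta q n j := (hq2 j h).symm
      have h2 : beta q n j < beta q n b := beta_strictAnti hq h hj
      omega
  refine ⟨hxmem, hlx, hmnot, ?_⟩
  rw [hm]
  ext y
  simp only [Finset.mem_insert, Finset.mem_erase, Bset, Finset.mem_image, Finset.mem_range]
  constructor
  · rintro ⟨i, hi, rfl⟩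
    rcases Nat.lt_or_ge i a with h | h
    · refine Or.inr ⟨?_, i, hi, (hq1 i h).symm⟩
      rw [hq1 i h, hx]
      have := beta_strictAnti hp h han
      omega
    · rcases Nat.lt_or_ge i b with h2 | h2
      · refine Or.inr ⟨?_, i + 1, by omega, (hq3 i h h2).symm⟩
        rw [hq3 i h h2, hx]
        have := beta_strictAnti hp (show a < i + 1 by omega) (show i + 1 < n by omega)
        omega
      · rcases Nat.eq_or_lt_of_le h2 with h3 | h3
        · exact Or.inl (by rw [← h3])
        · refine Or.inr ⟨?_, i, hi, (hq2 i h3).symm⟩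
          rw [hq2 i h3, hx]
          have h4 : beta p' n i < beta p' n b := beta_strictAnti hp h3 hi
          have h5 : x = beta p' n a := rfl
          have h6 : beta p' n b ≤ beta p' n a := by
            rcases Nat.eq_or_lt_of_le hab with h7 | h7
            · rw [h7]
            · exact le_of_lt (beta_strictAnti hp h7 hbn)
          omega
  · rintro (rfl | ⟨hne, j, hj, rfl⟩)
    · exact ⟨b, hbn, rfl⟩
    · rcases Nat.lt_or_ge j a with h | h
      · exact ⟨j, hj, hq1 j h⟩
      · rcases Nat.eq_or_lt_of_le h with h2 | h2
        · exact absurd (by rw [← h2]) hne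
        · rcases le_or_gt j b with h3 | h3
          · exact ⟨j - 1, by omega, by rw [hq3 (j-1) (by omega) (by omega)]; congr 1; omega⟩
          · exact ⟨j, hj, hq2 j h3⟩

/-- If `λ ⊢ n = ℓs` has empty `ℓ`-core (i.e. can be written as `s` successive ribbons of
length `ℓ`), then exactly `s` cells of `λ` have hook length divisible by `ℓ`. -/
theorem card_hooks_div_eq (n ℓ s : ℕ) (p : ℕ → ℕ) (hn : n = ℓ * s)
    (hp : IsPartitionOf n p) (hdec : RibbonDecomp p n ℓ s) :
    ((cells p n).filter fun c => ℓ ∣ hookLen p n c).card = s := by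
  obtain ⟨hanti, hpn, hsumn⟩ := hp
  obtain ⟨f, hfanti, hf0, hfs, hrib⟩ := hdec
  have hpbd : ∀ j, p j ≤ n := by
    intro j
    rcases le_or_gt n j with h | h
    · have := hanti h; omega
    · calc p j ≤ ∑ i ∈ Finset.range n, p i :=
            Finset.single_le_sum (fun i _ => Nat.zero_le _) (Finset.mem_range.mpr h)
        _ = n := hsumn
  have hstepmono : ∀ i < s, ∀ j, f i j ≤ f (i+1) j := fun i hi j => (hrib i hi).1 j
  have hchain : ∀ i k, i ≤ k → k ≤ s → ∀ j, f i j ≤ f k j := by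
    intro i k hik
    induction k, hik using Nat.le_induction with
    | base => intro _ j; exact le_refl _
    | succ k hk ih =>
      intro hks j
      exact le_trans (ih (by omega) j) (hstepmono k (by omega) j)
  have hfbd : ∀ i ≤ s, ∀ j, f i j ≤ p j := by
    intro i hi j
    rw [← hfs]
    exact hchain i s hi (le_refl _) j
  rcases Nat.eq_zero_or_pos ℓ with hl0 | hl
  · have hs0 : s = 0 := by
      by_contra hs
      obtain ⟨_, hcard, hne, _, _⟩ := hrib 0 (Nat.pos_of_ne_zero hs)
      rw [hl0] at hcard
      exact absurd (Finset.card_eq_zero.mp hcard) (Finset.nonempty_iff_ne_empty.mp hne)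
    have hn0 : n = 0 := by rw [hl0, Nat.zero_mul] at hn; exact hn
    subst hs0
    subst hn0
    simp [cells]
  · have key : ∀ i ≤ s, ((cells (f i) n).filter fun c => ℓ ∣ hookLen (f i) n c).card = i := by
      intro i hi
      induction i with
      | zero =>
        have : cells (f 0) n = ∅ := by
          ext c
          simp [cells, hf0]
        rw [this]
        simp
      | succ i ih =>
        have his : i < s := by omega
        have hNi := ih (by omega)
        set q := f i with hqdef
        set p' := f (i+1) with hpdef
        have hq : Antitone q := hfanti i
        have hp' : Antitone p' := hfanti (i+1)
        have hbdp : ∀ j, p' j ≤ n := fun j => le_trans (hfbd (i+1) (by omega) j) (hpbd j)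
        have hbdq : ∀ j, j < n → q j ≤ n := fun j _ => le_trans (hfbd i (by omega) j) (hpbd j)
        have hbdp' : ∀ j, j < n → p' j ≤ n := fun j _ => hbdp j
        have hpn' : p' n = 0 := by
          have h1 := hfbd (i+1) (by omega) n
          rw [hpn] at h1
          exact Nat.le_zero.mp h1
        obtain ⟨a, b, hab, hbn, hout1, hout2, hstep, hintv, htel⟩ :=
          ribbon_struct hq hp' hbdp hpn' (hrib i his)
        obtain ⟨hxmem, hlx, hmnot, hBeq⟩ :=
          bset_move hq hp' hab hbn hout1 hout2 hstep hintv htel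
        have e1 := count_eq hq (ℓ := ℓ) hbdq
        have e2 := count_eq hp' (ℓ := ℓ) hbdp'
        have e3 := sumdiv_move hl hxmem hlx hmnot
        have e4 := pcount_move hl hxmem hlx hmnot
        rw [hBeq] at e1
        omega
    have := key s (le_refl _)
    rw [hfs] at this
    exact this
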